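/- arXiv:2302.02260 — 5 statements merged into one kernel-verified Lean document; each statement's English description precedes it below -/
import Mathlib

section
/- For a q-matroid M=(E,ρ) and any subspace V ≤ E, the cyclic core cyc(V) = {x ∈ V : ρ(W) = ρ(V) for all subspaces W ≤ V with W + ⟨x⟩ = V} is a linear subspace of E. -/
/-!
A subspace `W ≤ V` with `W + ⟨z⟩ = V` is covered by `V`, so `W + ⟨x⟩ = V` for every `x ∈ V \ W`.
Hence if `W + ⟨x + y⟩ = V`, either `x ∈ W`, and then `W + ⟨y⟩ = V`, or `x ∉ W`, and then
`W + ⟨x⟩ = V`; either way the condition on `x` or on `y` applies. Zero and scalar multiples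
are immediate because `W + ⟨0⟩ = W` and `⟨c • x⟩ = ⟨x⟩` for `c ≠ 0`.
-/

open Submodule Module

namespace QM

variable (F : Type*) {E : Type*} [Field F] [AddCommGroup E] [Module F E]

/-- The rank axioms (R1)-(R3) of a q-matroid. -/
def IsRkFn (ρ : Submodule F E → ℕ) : Prop :=
  (∀ V : Submodule F E, ρ V ≤ finrank F V) ∧
  (∀ ⦃V W : Submodule F E⦄, V ≤ W → ρ V ≤ ρ W) ∧
  (∀ V W : Submodule F E, ρ (V ⊔ W) + ρ (V ⊓ W) ≤ ρ V + ρ W)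

variable {F}

/-- Independent spaces. -/
def Indep (ρ : Submodule F E → ℕ) (V : Submodule F E) : Prop := ρ V = finrank F V

/-- Circuits: dependent spaces all of whose proper subspaces are independent. -/
def IsCircuit (ρ : Submodule F E → ℕ) (C : Submodule F E) : Prop :=
  ¬ Indep ρ C ∧ ∀ D : Submodule F E, D < C → Indep ρ D

/-- Open spaces: sums of circuits. -/
def IsOpenSp (ρ : Submodule F E → ℕ) (V : Submodule F E) : Prop :=
  ∃ S : Set (Submodule F E), (∀ C ∈ S, IsCircuit ρ C) ∧ V = sSup S

/-- The cyclic core: the sum of all circuits contained in `V`. -/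
def cyc (ρ : Submodule F E → ℕ) (V : Submodule F E) : Submodule F E :=
  sSup {C : Submodule F E | IsCircuit ρ C ∧ C ≤ V}

/-- The closure operator: the sum of all `⟨x⟩` with `ρ(V + ⟨x⟩) = ρ V`. -/
def cl (ρ : Submodule F E → ℕ) (V : Submodule F E) : Submodule F E :=
  sSup {W : Submodule F E | ∃ x : E, ρ (V ⊔ span F {x}) = ρ V ∧ W = span F {x}}

/-- Flats. -/
def IsFlat (ρ : Submodule F E → ℕ) (V : Submodule F E) : Prop :=
  ∀ x : E, x ∉ V → ρ V < ρ (V ⊔ span F {x})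

/-- Cyclic flats. -/
def CyclicFlat (ρ : Submodule F E → ℕ) (V : Submodule F E) : Prop :=
  IsFlat ρ V ∧ IsOpenSp ρ V

end QM

namespace QM

section

variable {F E : Type*} [Field F] [AddCommGroup E] [Module F E]

theorem sup_span_singleton_eq_of_notMem {W V : Submodule F E} {x z : E} (hWV : W ≤ V)
    (hxV : x ∈ V) (hxW : x ∉ W) (hz : W ⊔ span F {z} = V) : W ⊔ span F {x} = V := by
  have hcov : W ⩿ V := hz ▸ sup_comm (span F {z}) W ▸ wcovBy_span_singleton_sup z W
  have hxle : W ⊔ span F {x} ≤ V := sup_le hWV ((span_singleton_le_iff_mem x V).2 hxV)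
  refine (hcov.eq_or_eq le_sup_left hxle).resolve_left fun h => hxW ?_
  exact h ▸ mem_sup_right (mem_span_singleton_self x)

theorem sup_span_singleton_add_of_mem {W : Submodule F E} {x : E} (hx : x ∈ W) (y : E) :
    W ⊔ span F {x + y} = W ⊔ span F {y} := by
  have sup_le_of_mem : ∀ {a b : E}, a ∈ W → W ⊔ span F {a + b} ≤ W ⊔ span F {b} := fun ha =>
    sup_le le_sup_left <| (span_singleton_le_iff_mem _ _).2 <|
      add_mem (mem_sup_left ha) (mem_sup_right (mem_span_singleton_self _))
  refine le_antisymm (sup_le_of_mem hx) ?_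
  simpa using sup_le_of_mem (neg_mem hx) (b := x + y)

/-- The paper's `cyc V` in its elementwise form (`cyc` is the sum of circuits). -/
def cyclicCore {α : Type*} (ρ : Submodule F E → α) (V : Submodule F E) : Submodule F E where
  carrier := {x | x ∈ V ∧ ∀ W : Submodule F E, W ≤ V → W ⊔ span F {x} = V → ρ W = ρ V}
  zero_mem' := ⟨V.zero_mem, fun W _ hW => by rw [← hW, span_zero_singleton, sup_bot_eq]⟩
  add_mem' := by
    rintro x y ⟨hxV, hx⟩ ⟨hyV, hy⟩
    refine ⟨V.add_mem hxV hyV, fun W hWV hW => ?_⟩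
    by_cases hxW : x ∈ W
    · exact hy W hWV (sup_span_singleton_add_of_mem hxW y ▸ hW)
    · exact hx W hWV (sup_span_singleton_eq_of_notMem hWV hxV hxW hW)
  smul_mem' := by
    rintro c x ⟨hxV, hx⟩
    refine ⟨V.smul_mem c hxV, fun W hWV hW => ?_⟩
    rcases eq_or_ne c 0 with rfl | hc
    · rw [← hW, zero_smul, span_zero_singleton, sup_bot_eq]
    · exact hx W hWV (span_singleton_smul_eq (IsUnit.mk0 c hc) x ▸ hW)

end

variable {F E : Type*} [Field F] [Fintype F] [AddCommGroup E] [Module F E]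
  [FiniteDimensional F E]

theorem stmt1_general (ρ : Submodule F E → ℕ) (V : Submodule F E) :
    ∃ U : Submodule F E, (U : Set E) =
      {x : E | x ∈ V ∧ ∀ W : Submodule F E, W ≤ V → W ⊔ span F {x} = V → ρ W = ρ V} :=
  ⟨cyclicCore ρ V, rfl⟩

theorem stmt1 (ρ : Submodule F E → ℕ) (hρ : IsRkFn F ρ) (V : Submodule F E) :
    ∃ U : Submodule F E, (U : Set E) =
      {x : E | x ∈ V ∧ ∀ W : Submodule F E, W ≤ V → W ⊔ span F {x} = V → ρ W = ρ V} :=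
  stmt1_general ρ V

end QM
end

section
/- Let M=(E,ρ) be a q-matroid with dual M* with respect to a fixed non-degenerate symmetric bilinear form. For every subspace V ≤ E, cyc(V)^⊥ = cl*(V^⊥), where cyc is the cyclic-core operator of M and cl* is the closure operator of M*. -/
open Submodule Module

namespace QM

variable {F E : Type*} [Field F] [AddCommGroup E] [Module F E]

/-- The dual rank function `ρ*(V) = dim V + ρ(V^⊥) − ρ(E)` with respect to a bilinear form. -/
noncomputable def dualRk (ρ : Submodule F E → ℕ) (B : LinearMap.BilinForm F E) (V : Submodule F E) : ℕ :=
  finrank F V + ρ (B.orthogonal V) - ρ ⊤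

end QM
/-!
Write `W = V^⊥` and let `x ∉ W`. Then `H = (W + ⟨x⟩)^⊥ = V ∩ x^⊥` is a hyperplane of `V`, and
unwinding the definition of `ρ*` shows `ρ*(W + ⟨x⟩) = ρ*(W)` exactly when `ρ(H) < ρ(V)`.
A hyperplane `H` of `V` has smaller rank precisely when it contains every circuit inside `V`:
a circuit `C ⊄ H` meets `H` in a proper, hence independent, subspace, and submodularity for `H`
and `C` gives `ρ(V) ≤ ρ(H)`; conversely, if `ρ(H) = ρ(V)`, adding a vector of `V ∖ H` to an
independent subspace of `H` of full rank produces a dependent space all of whose circuits leave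
`H`. Hence `x ∈ cl*(W)` iff `cyc(V) ≤ x^⊥`, i.e. `x ∈ cyc(V)^⊥`.
-/

namespace QM

section RankFunction

variable {F E : Type*} [Field F] [AddCommGroup E] [Module F E] {ρ : Submodule F E → ℕ}

theorem IsRkFn.rk_le_finrank (hρ : IsRkFn F ρ) (V : Submodule F E) : ρ V ≤ finrank F V :=
  hρ.1 V

theorem IsRkFn.mono (hρ : IsRkFn F ρ) {V W : Submodule F E} (h : V ≤ W) : ρ V ≤ ρ W :=
  hρ.2.1 h

theorem IsRkFn.submod (hρ : IsRkFn F ρ) (V W : Submodule F E) :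
    ρ (V ⊔ W) + ρ (V ⊓ W) ≤ ρ V + ρ W :=
  hρ.2.2 V W

theorem IsRkFn.indep_bot (hρ : IsRkFn F ρ) : Indep ρ (⊥ : Submodule F E) := by
  simpa [Indep] using hρ.rk_le_finrank ⊥

theorem cyc_le (ρ : Submodule F E → ℕ) (V : Submodule F E) : cyc ρ V ≤ V :=
  sSup_le fun _ hC => hC.2

theorem mem_cl_of_rk_sup_eq {W : Submodule F E} {x : E} (h : ρ (W ⊔ span F {x}) = ρ W) :
    x ∈ cl ρ W :=
  le_sSup (s := {U | ∃ y : E, ρ (W ⊔ span F {y}) = ρ W ∧ U = span F {y}}) ⟨x, h, rfl⟩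
    (mem_span_singleton_self x)

theorem cl_le {W U : Submodule F E} (h : ∀ x, ρ (W ⊔ span F {x}) = ρ W → x ∈ U) :
    cl ρ W ≤ U :=
  sSup_le fun _ ⟨x, hx, hW⟩ => hW ▸ (span_singleton_le_iff_mem x U).2 (h x hx)

theorem IsRkFn.rk_sup_sup_eq (hρ : IsRkFn F ρ) {I W₁ W₂ : Submodule F E}
    (h₁ : ρ (I ⊔ W₁) = ρ I) (h₂ : ρ (I ⊔ W₂) = ρ I) : ρ (I ⊔ (W₁ ⊔ W₂)) = ρ I := by
  have hsub := hρ.submod (I ⊔ W₁) (I ⊔ W₂)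
  rw [← sup_sup_distrib_left] at hsub
  have := hρ.mono (le_inf (le_sup_left : I ≤ I ⊔ W₁) (le_sup_left : I ≤ I ⊔ W₂))
  have := hρ.mono (le_sup_left : I ≤ I ⊔ (W₁ ⊔ W₂))
  omega

variable [FiniteDimensional F E]

theorem IsRkFn.rk_add_finrank_le (hρ : IsRkFn F ρ) {A B : Submodule F E} (h : B ≤ A) :
    ρ A + finrank F B ≤ ρ B + finrank F A := by
  obtain ⟨C, hC⟩ := B.exists_isCompl
  have hsup : B ⊔ C ⊓ A = A := by
    rw [← sup_inf_assoc_of_le C h, hC.sup_eq_top, top_inf_eq]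
  have hinf : B ⊓ (C ⊓ A) = ⊥ := eq_bot_iff.2 (hC.inf_eq_bot ▸ inf_le_inf_left B inf_le_left)
  have hdim := finrank_sup_add_finrank_inf_eq B (C ⊓ A)
  have hsub := hρ.submod B (C ⊓ A)
  rw [hsup, hinf, finrank_bot] at hdim
  rw [hsup] at hsub
  have := hρ.rk_le_finrank (C ⊓ A)
  omega

theorem IsRkFn.indep_of_le (hρ : IsRkFn F ρ) {C I : Submodule F E} (hI : Indep ρ I)
    (h : C ≤ I) : Indep ρ C := by
  have := hρ.rk_add_finrank_le h
  have := hρ.rk_le_finrank C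
  rw [Indep] at hI ⊢
  omega

theorem exists_isCircuit_le {A : Submodule F E} (hA : ¬ Indep ρ A) :
    ∃ C ≤ A, IsCircuit ρ C := by
  obtain ⟨C, ⟨hCA, hC⟩, hmin⟩ :=
    wellFounded_lt.has_min {C : Submodule F E | C ≤ A ∧ ¬ Indep ρ C} ⟨A, le_rfl, hA⟩
  exact ⟨C, hCA, hC, fun D hD => by_contra fun hD' => hmin D ⟨hD.le.trans hCA, hD'⟩ hD⟩

theorem IsRkFn.rk_sup_eq_of_forall_mem (hρ : IsRkFn F ρ) {I A : Submodule F E}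
    (h : ∀ x ∈ A, ρ (I ⊔ span F {x}) = ρ I) : ρ (I ⊔ A) = ρ I := by
  obtain ⟨M, hM, hmax⟩ :=
    wellFounded_gt.has_min {W : Submodule F E | ρ (I ⊔ W) = ρ I} ⟨⊥, by simp⟩
  have hAM : A ≤ M := fun x hx =>
    have hle : M ≤ M ⊔ span F {x} := le_sup_left
    (span_singleton_le_iff_mem x M).1
      (le_sup_right.trans (eq_of_le_of_not_lt hle (hmax _ (hρ.rk_sup_sup_eq hM (h x hx)))).ge)
  exact le_antisymm ((hρ.mono (sup_le_sup_left hAM I)).trans hM.le) (hρ.mono le_sup_left)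

theorem IsRkFn.exists_indep_le_rk_eq (hρ : IsRkFn F ρ) (A : Submodule F E) :
    ∃ I ≤ A, Indep ρ I ∧ ρ I = ρ A := by
  obtain ⟨I, ⟨hIA, hI⟩, hmax⟩ :=
    wellFounded_gt.has_min {I : Submodule F E | I ≤ A ∧ Indep ρ I} ⟨⊥, bot_le, hρ.indep_bot⟩
  have hspan : ∀ x ∈ A, ρ (I ⊔ span F {x}) = ρ I := fun x hx => by
    by_cases hxI : x ∈ I
    · rw [sup_eq_left.2 ((span_singleton_le_iff_mem x I).2 hxI)]
    have hdep : ¬ Indep ρ (I ⊔ span F {x}) := fun hdep =>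
      hmax _ ⟨sup_le hIA ((span_singleton_le_iff_mem x A).2 hx), hdep⟩
        (left_lt_sup.2 fun h => hxI ((span_singleton_le_iff_mem x I).1 h))
    have hle := hρ.rk_add_finrank_le (le_sup_left : I ≤ I ⊔ span F {x})
    have := hρ.mono (le_sup_left : I ≤ I ⊔ span F {x})
    rw [Indep, Submodule.finrank_sup_span_singleton hxI] at hdep
    rw [Submodule.finrank_sup_span_singleton hxI] at hle
    rw [Indep] at hI
    omega
  refine ⟨I, hIA, hI, le_antisymm (hρ.mono hIA) ?_⟩
  calc ρ A ≤ ρ (I ⊔ A) := hρ.mono le_sup_right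
    _ = ρ I := hρ.rk_sup_eq_of_forall_mem hspan

theorem IsRkFn.exists_isCircuit_not_le (hρ : IsRkFn F ρ) {H V : Submodule F E} (hHV : H < V)
    (hrk : ρ V ≤ ρ H) : ∃ C, IsCircuit ρ C ∧ C ≤ V ∧ ¬ C ≤ H := by
  obtain ⟨I, hIH, hI, hIrk⟩ := hρ.exists_indep_le_rk_eq H
  obtain ⟨v, hvV, hvH⟩ := SetLike.exists_of_lt hHV
  set D := I ⊔ span F {v}
  have hDV : D ≤ V := sup_le (hIH.trans hHV.le) ((span_singleton_le_iff_mem v V).2 hvV)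
  have hDH : D ⊓ H = I := by
    rw [sup_inf_assoc_of_le _ hIH, (disjoint_span_singleton_of_notMem hvH).symm.eq_bot, sup_bot_eq]
  have hD : ¬ Indep ρ D := by
    have := hρ.mono hDV
    rw [Indep, Submodule.finrank_sup_span_singleton fun h => hvH (hIH h)]
    rw [Indep] at hI
    omega
  obtain ⟨C, hCD, hC⟩ := exists_isCircuit_le hD
  refine ⟨C, hC, hCD.trans hDV, fun hCH => hC.1 (hρ.indep_of_le hI ?_)⟩
  exact hDH ▸ le_inf hCD hCH

theorem IsRkFn.rk_le_of_isCircuit_not_le (hρ : IsRkFn F ρ) {H V C : Submodule F E} (hHV : H ≤ V)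
    (hdim : finrank F H + 1 = finrank F V) (hC : IsCircuit ρ C) (hCV : C ≤ V) (hCH : ¬ C ≤ H) :
    ρ V ≤ ρ H := by
  have hsup : H ⊔ C = V := by
    refine eq_of_le_of_finrank_le (sup_le hHV hCV) ?_
    have := finrank_lt_finrank_of_lt (left_lt_sup.2 hCH)
    omega
  have hindep : Indep ρ (H ⊓ C) := hC.2 _ (inf_comm C H ▸ inf_lt_left.2 hCH)
  have hCdep : ρ C < finrank F C := lt_of_le_of_ne (hρ.rk_le_finrank C) hC.1
  have hdim' := finrank_sup_add_finrank_inf_eq H C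
  have hsub := hρ.submod H C
  rw [hsup] at hdim' hsub
  rw [Indep] at hindep
  omega

theorem IsRkFn.rk_lt_iff_cyc_le (hρ : IsRkFn F ρ) {H V : Submodule F E} (hHV : H ≤ V)
    (hdim : finrank F H + 1 = finrank F V) : ρ H < ρ V ↔ cyc ρ V ≤ H := by
  rw [cyc, sSup_le_iff]
  constructor
  · rintro hlt C ⟨hC, hCV⟩
    by_contra hCH
    exact (hρ.rk_le_of_isCircuit_not_le hHV hdim hC hCV hCH).not_gt hlt
  · intro hcyc
    by_contra! hrk
    have hHV' : H < V := lt_of_le_of_ne hHV fun h => by rw [h] at hdim; omega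
    obtain ⟨C, hC, hCV, hCH⟩ := hρ.exists_isCircuit_not_le hHV' hrk
    exact hCH (hcyc C ⟨hC, hCV⟩)

end RankFunction

section Duality

open LinearMap (BilinForm)

variable {F E : Type*} [Field F] [AddCommGroup E] [Module F E] {B : BilinForm F E}

theorem le_orthogonal_comm (hB : B.IsRefl) {N L : Submodule F E} :
    N ≤ B.orthogonal L ↔ L ≤ B.orthogonal N :=
  ⟨fun h => (BilinForm.le_orthogonal_orthogonal hB).trans (BilinForm.orthogonal_le h),
    fun h => (BilinForm.le_orthogonal_orthogonal hB).trans (BilinForm.orthogonal_le h)⟩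

variable [FiniteDimensional F E] {ρ : Submodule F E → ℕ}

theorem finrank_orthogonal_sup_span_singleton (hB : B.Nondegenerate) {W : Submodule F E} {x : E}
    (hx : x ∉ W) : finrank F (B.orthogonal (W ⊔ span F {x})) + 1 = finrank F (B.orthogonal W) := by
  have := (W ⊔ span F {x}).finrank_le
  rw [finrank_sup_span_singleton hx] at this
  rw [BilinForm.finrank_orthogonal hB, BilinForm.finrank_orthogonal hB,
    finrank_sup_span_singleton hx]
  omega

theorem IsRkFn.rk_top_le (hρ : IsRkFn F ρ) (hB : B.Nondegenerate) (W : Submodule F E) :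
    ρ ⊤ ≤ finrank F W + ρ (B.orthogonal W) := by
  have := hρ.rk_add_finrank_le (le_top : B.orthogonal W ≤ ⊤)
  have := W.finrank_le
  rw [finrank_top, BilinForm.finrank_orthogonal hB] at *
  omega

theorem IsRkFn.dualRk_sup_span_singleton_eq_iff (hρ : IsRkFn F ρ) (hB : B.Nondegenerate)
    {W : Submodule F E} {x : E} (hx : x ∉ W) :
    dualRk ρ B (W ⊔ span F {x}) = dualRk ρ B W ↔
      ρ (B.orthogonal (W ⊔ span F {x})) < ρ (B.orthogonal W) := by
  -- these two bounds keep the truncated subtraction in `dualRk` honest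
  have h₁ := hρ.rk_top_le hB W
  have h₂ := hρ.rk_top_le hB (W ⊔ span F {x})
  have hdim := finrank_orthogonal_sup_span_singleton hB hx
  have hle := hρ.rk_add_finrank_le (BilinForm.orthogonal_le le_sup_left :
    B.orthogonal (W ⊔ span F {x}) ≤ B.orthogonal W)
  rw [finrank_sup_span_singleton hx] at h₂
  rw [dualRk, dualRk, finrank_sup_span_singleton hx]
  omega

theorem IsRkFn.mem_orthogonal_cyc_iff (hρ : IsRkFn F ρ) (hB : B.Nondegenerate) (hB' : B.IsRefl)
    (V : Submodule F E) (x : E) :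
    x ∈ B.orthogonal (cyc ρ V) ↔
      dualRk ρ B (B.orthogonal V ⊔ span F {x}) = dualRk ρ B (B.orthogonal V) := by
  by_cases hx : x ∈ B.orthogonal V
  · rw [sup_eq_left.2 ((span_singleton_le_iff_mem _ _).2 hx)]
    exact iff_of_true (BilinForm.orthogonal_le (cyc_le ρ V) hx) rfl
  have hV : B.orthogonal (B.orthogonal V) = V := BilinForm.orthogonal_orthogonal hB hB' V
  have hHV : B.orthogonal (B.orthogonal V ⊔ span F {x}) ≤ V :=
    hV.le.trans' (BilinForm.orthogonal_le le_sup_left)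
  have hdim := finrank_orthogonal_sup_span_singleton hB hx
  rw [hV] at hdim
  rw [hρ.dualRk_sup_span_singleton_eq_iff hB hx, hV, hρ.rk_lt_iff_cyc_le hHV hdim,
    le_orthogonal_comm hB', sup_le_iff, span_singleton_le_iff_mem]
  exact (and_iff_right (BilinForm.orthogonal_le (cyc_le ρ V))).symm

end Duality

end QM

namespace QM

variable {F E : Type*} [Field F] [Fintype F] [AddCommGroup E] [Module F E]
  [FiniteDimensional F E]

theorem stmt3 (ρ : Submodule F E → ℕ) (hρ : IsRkFn F ρ)
    (B : LinearMap.BilinForm F E) (hB : B.Nondegenerate) (hBsymm : B.IsSymm)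
    (V : Submodule F E) :
    B.orthogonal (cyc ρ V) = cl (dualRk ρ B) (B.orthogonal V) :=
  le_antisymm
    (fun x hx => mem_cl_of_rk_sup_eq ((hρ.mem_orthogonal_cyc_iff hB hBsymm.isRefl V x).1 hx))
    (cl_le fun x hx => (hρ.mem_orthogonal_cyc_iff hB hBsymm.isRefl V x).2 hx)

end QM
end

section
/- Let M₁=(E,ρ₁) and M₂=(E,ρ₂) be q-matroids on the same ground space E. Then the map ρ(V) = dim V + min{ρ₁(X)+ρ₂(X)−dim X : X ≤ V} satisfies the q-matroid rank axioms (R1)-(R3), defining the union q-matroid M₁∨M₂. -/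
/-! The rank of `V` is the minimum over `X ≤ V` of `ρ₁ X + ρ₂ X + dim V - dim X`. Taking `X = 0`
gives (R1); intersecting a minimiser for `W` with `V ≤ W` gives (R2); and for (R3) the join and
meet of minimisers for `V` and `W` are admissible for `V + W` and `V ∩ W`, so submodularity of
`ρ₁`, `ρ₂` and modularity of `dim` do the rest. -/

open Submodule Module

namespace QM

section UnionRank

variable {F E : Type*} [Field F] [AddCommGroup E] [Module F E] {ρ ρ₁ ρ₂ : Submodule F E → ℕ}

theorem IsRkFn.map_bot (h : IsRkFn F ρ) : ρ ⊥ = 0 :=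
  Nat.le_zero.mp (by simpa using h.1 ⊥)

variable (ρ₁ ρ₂) in
noncomputable def unionRk (V : Submodule F E) : ℕ :=
  sInf {n : ℕ | ∃ X : Submodule F E, X ≤ V ∧ n = ρ₁ X + ρ₂ X + (finrank F V - finrank F X)}

theorem unionRk_le {X V : Submodule F E} (hXV : X ≤ V) :
    unionRk ρ₁ ρ₂ V ≤ ρ₁ X + ρ₂ X + (finrank F V - finrank F X) :=
  Nat.sInf_le ⟨X, hXV, rfl⟩

variable (ρ₁ ρ₂) in
theorem exists_unionRk_eq (V : Submodule F E) :
    ∃ X ≤ V, unionRk ρ₁ ρ₂ V = ρ₁ X + ρ₂ X + (finrank F V - finrank F X) :=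
  Nat.sInf_mem (s := {n | ∃ X ≤ V, n = ρ₁ X + ρ₂ X + (finrank F V - finrank F X)})
    ⟨_, ⊥, bot_le, rfl⟩

theorem unionRk_le_finrank (h₁ : ρ₁ ⊥ = 0) (h₂ : ρ₂ ⊥ = 0) (V : Submodule F E) :
    unionRk ρ₁ ρ₂ V ≤ finrank F V := by
  simpa [h₁, h₂] using unionRk_le (ρ₁ := ρ₁) (ρ₂ := ρ₂) (bot_le : ⊥ ≤ V)

variable [FiniteDimensional F E]

theorem unionRk_mono (h₁ : Monotone ρ₁) (h₂ : Monotone ρ₂) : Monotone (unionRk ρ₁ ρ₂) := by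
  intro V W hVW
  obtain ⟨X, hXW, hX⟩ := exists_unionRk_eq ρ₁ ρ₂ W
  have m₁ : ρ₁ (X ⊓ V) ≤ ρ₁ X := h₁ inf_le_left
  have m₂ : ρ₂ (X ⊓ V) ≤ ρ₂ X := h₂ inf_le_left
  have hd := finrank_sup_add_finrank_inf_eq X V
  have hsup : finrank F ↥(X ⊔ V) ≤ finrank F W := finrank_mono (sup_le hXW hVW)
  have hX_le : finrank F X ≤ finrank F W := finrank_mono hXW
  have hinf : finrank F ↥(X ⊓ V) ≤ finrank F V := finrank_mono inf_le_right
  have hV := unionRk_le (ρ₁ := ρ₁) (ρ₂ := ρ₂) (inf_le_right : X ⊓ V ≤ V)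
  omega

theorem unionRk_sup_add_inf_le
    (h₁ : ∀ V W : Submodule F E, ρ₁ (V ⊔ W) + ρ₁ (V ⊓ W) ≤ ρ₁ V + ρ₁ W)
    (h₂ : ∀ V W : Submodule F E, ρ₂ (V ⊔ W) + ρ₂ (V ⊓ W) ≤ ρ₂ V + ρ₂ W)
    (V W : Submodule F E) :
    unionRk ρ₁ ρ₂ (V ⊔ W) + unionRk ρ₁ ρ₂ (V ⊓ W) ≤ unionRk ρ₁ ρ₂ V + unionRk ρ₁ ρ₂ W := by
  obtain ⟨X, hXV, hX⟩ := exists_unionRk_eq ρ₁ ρ₂ V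
  obtain ⟨Y, hYW, hY⟩ := exists_unionRk_eq ρ₁ ρ₂ W
  have hsup := unionRk_le (ρ₁ := ρ₁) (ρ₂ := ρ₂) (sup_le_sup hXV hYW)
  have hinf := unionRk_le (ρ₁ := ρ₁) (ρ₂ := ρ₂) (inf_le_inf hXV hYW)
  have s₁ := h₁ X Y
  have s₂ := h₂ X Y
  have dVW := finrank_sup_add_finrank_inf_eq V W
  have dXY := finrank_sup_add_finrank_inf_eq X Y
  have b₁ : finrank F ↥(X ⊔ Y) ≤ finrank F ↥(V ⊔ W) := finrank_mono (sup_le_sup hXV hYW)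
  have b₂ : finrank F ↥(X ⊓ Y) ≤ finrank F ↥(V ⊓ W) := finrank_mono (inf_le_inf hXV hYW)
  have b₃ : finrank F X ≤ finrank F V := finrank_mono hXV
  have b₄ : finrank F Y ≤ finrank F W := finrank_mono hYW
  omega

theorem IsRkFn.unionRk (h₁ : IsRkFn F ρ₁) (h₂ : IsRkFn F ρ₂) : IsRkFn F (unionRk ρ₁ ρ₂) :=
  ⟨unionRk_le_finrank h₁.map_bot h₂.map_bot, unionRk_mono h₁.2.1 h₂.2.1,
    unionRk_sup_add_inf_le h₁.2.2 h₂.2.2⟩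

end UnionRank

variable {F E : Type*} [Field F] [Fintype F] [AddCommGroup E] [Module F E]
  [FiniteDimensional F E]

theorem stmt12 (ρ₁ ρ₂ : Submodule F E → ℕ) (h₁ : IsRkFn F ρ₁) (h₂ : IsRkFn F ρ₂) :
    IsRkFn F (fun V : Submodule F E =>
      sInf {n : ℕ | ∃ X : Submodule F E, X ≤ V ∧
        n = ρ₁ X + ρ₂ X + (finrank F V - finrank F X)}) :=
  h₁.unionRk h₂

end QM
end

section
/- Let M₁=(E₁,ρ₁), M₂=(E₂,ρ₂) be q-matroids and M=M₁⊕M₂ their direct sum with rank function ρ. For all subspaces V₁ ≤ E₁ and V₂ ≤ E₂, ρ(V₁⊕V₂) = ρ₁(V₁) + ρ₂(V₂). In particular ρ(M) = ρ₁(M₁) + ρ₂(M₂). -/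
open Submodule Module

namespace QM

variable {F E₁ E₂ : Type*} [Field F] [AddCommGroup E₁] [Module F E₁]
  [AddCommGroup E₂] [Module F E₂]

/-- The rank function of the direct sum `M₁ ⊕ M₂` on `E₁ × E₂`:
`ρ(V) = dim V + min { ρ₁(π₁ X) + ρ₂(π₂ X) − dim X : X ≤ V }`
(written in `ℕ` as `min { ρ₁(π₁ X) + ρ₂(π₂ X) + (dim V − dim X) : X ≤ V }`,
which agrees since `dim X ≤ dim V`). -/
noncomputable def dsRank (ρ₁ : Submodule F E₁ → ℕ) (ρ₂ : Submodule F E₂ → ℕ)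
    (V : Submodule F (E₁ × E₂)) : ℕ :=
  sInf {n : ℕ | ∃ X : Submodule F (E₁ × E₂), X ≤ V ∧
    n = ρ₁ (X.map (LinearMap.fst F E₁ E₂)) + ρ₂ (X.map (LinearMap.snd F E₁ E₂)) +
      (finrank F V - finrank F X)}

end QM

/-!
For `X ≤ V₁ ⊕ V₂` the projections `A = π₁ X ≤ V₁` and `B = π₂ X ≤ V₂` satisfy
`dim X ≤ dim A + dim B`. Submodularity applied to `A` and a complement `C` of `A` in `V₁` gives
`ρ₁ V₁ ≤ ρ₁ A + ρ₁ C ≤ ρ₁ A + (dim V₁ - dim A)`, and similarly for `B ≤ V₂`, so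
`ρ₁ V₁ + ρ₂ V₂ ≤ ρ₁ A + ρ₂ B + (dim V₁ - dim A) + (dim V₂ - dim B) ≤ ρ₁ A + ρ₂ B + (dim V - dim X)`.
Hence the minimum defining the direct-sum rank is attained at `X = V₁ ⊕ V₂` itself.
-/

theorem Submodule.finrank_prod {F E₁ E₂ : Type*} [Field F] [AddCommGroup E₁] [Module F E₁]
    [AddCommGroup E₂] [Module F E₂] (p : Submodule F E₁) (q : Submodule F E₂)
    [FiniteDimensional F p] [FiniteDimensional F q] :
    finrank F (p.prod q) = finrank F p + finrank F q := by
  have hrange : LinearMap.range (p.subtype.prodMap q.subtype) = p.prod q := by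
    ext ⟨a, b⟩
    simp
  rw [← hrange, LinearMap.finrank_range_of_inj, Module.finrank_prod]
  exact Prod.map_injective.2 ⟨p.injective_subtype, q.injective_subtype⟩

namespace QM

theorem IsRkFn.le_add_finrank_sub {F E : Type*} [Field F] [AddCommGroup E] [Module F E]
    [FiniteDimensional F E] {ρ : Submodule F E → ℕ} (h : IsRkFn F ρ)
    {V W : Submodule F E} (hVW : V ≤ W) :
    ρ W ≤ ρ V + (finrank F W - finrank F V) := by
  obtain ⟨C, hdisj, rfl⟩ := IsModularLattice.exists_disjoint_and_sup_eq hVW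
  have hsub := h.2.2 V C
  have hC := h.1 C
  have hdim := Submodule.finrank_sup_add_finrank_inf_eq V C
  rw [hdisj.eq_bot, finrank_bot] at hdim
  omega

section DirectSum

variable {F E₁ E₂ : Type*} [Field F] [AddCommGroup E₁] [Module F E₁]
  [AddCommGroup E₂] [Module F E₂] {ρ₁ : Submodule F E₁ → ℕ} {ρ₂ : Submodule F E₂ → ℕ}

theorem dsRank_le_map_fst_add_map_snd (V : Submodule F (E₁ × E₂)) :
    dsRank ρ₁ ρ₂ V ≤
      ρ₁ (V.map (LinearMap.fst F E₁ E₂)) + ρ₂ (V.map (LinearMap.snd F E₁ E₂)) :=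
  Nat.sInf_le ⟨V, le_rfl, by rw [Nat.sub_self, Nat.add_zero]⟩

variable [FiniteDimensional F E₁] [FiniteDimensional F E₂]

theorem le_dsRank_prod (h₁ : IsRkFn F ρ₁) (h₂ : IsRkFn F ρ₂)
    (V₁ : Submodule F E₁) (V₂ : Submodule F E₂) :
    ρ₁ V₁ + ρ₂ V₂ ≤ dsRank ρ₁ ρ₂ (V₁.prod V₂) := by
  refine le_csInf ⟨_, V₁.prod V₂, le_rfl, rfl⟩ ?_
  rintro _ ⟨X, hXV, rfl⟩
  set A := X.map (LinearMap.fst F E₁ E₂)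
  set B := X.map (LinearMap.snd F E₁ E₂)
  obtain ⟨hAV, hBV⟩ : A ≤ V₁ ∧ B ≤ V₂ := (le_prod_iff F E₁ E₂).1 hXV
  have hXAB : finrank F X ≤ finrank F A + finrank F B := by
    rw [← Submodule.finrank_prod]
    exact Submodule.finrank_mono ((le_prod_iff F E₁ E₂).2 ⟨le_rfl, le_rfl⟩)
  have hV : finrank F (V₁.prod V₂) = finrank F V₁ + finrank F V₂ := Submodule.finrank_prod V₁ V₂
  have hr₁ := h₁.le_add_finrank_sub hAV
  have hr₂ := h₂.le_add_finrank_sub hBV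
  have hA := Submodule.finrank_mono hAV
  have hB := Submodule.finrank_mono hBV
  omega

theorem dsRank_prod (h₁ : IsRkFn F ρ₁) (h₂ : IsRkFn F ρ₂)
    (V₁ : Submodule F E₁) (V₂ : Submodule F E₂) :
    dsRank ρ₁ ρ₂ (V₁.prod V₂) = ρ₁ V₁ + ρ₂ V₂ :=
  le_antisymm (by simpa using dsRank_le_map_fst_add_map_snd (V₁.prod V₂))
    (le_dsRank_prod h₁ h₂ V₁ V₂)

end DirectSum

end QM

namespace QM

variable {F E₁ E₂ : Type*} [Field F] [Fintype F]
  [AddCommGroup E₁] [Module F E₁] [FiniteDimensional F E₁]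
  [AddCommGroup E₂] [Module F E₂] [FiniteDimensional F E₂]

theorem stmt13 (ρ₁ : Submodule F E₁ → ℕ) (ρ₂ : Submodule F E₂ → ℕ)
    (h₁ : IsRkFn F ρ₁) (h₂ : IsRkFn F ρ₂)
    (V₁ : Submodule F E₁) (V₂ : Submodule F E₂) :
    dsRank ρ₁ ρ₂ (V₁.prod V₂) = ρ₁ V₁ + ρ₂ V₂ ∧
    dsRank ρ₁ ρ₂ ⊤ = ρ₁ ⊤ + ρ₂ ⊤ :=
  ⟨dsRank_prod h₁ h₂ V₁ V₂, by simpa using dsRank_prod h₁ h₂ ⊤ ⊤⟩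

end QM
end

section
/- With the rank function ρ of the direct sum M₁⊕M₂ of q-matroids, for every subspace V of E₁⊕E₂ one has ρ(V) = dim V + min over pairs (X₁,X₂) with Xᵢ ≤ πᵢ(V) of ( ρ₁(X₁)+ρ₂(X₂) − dim((X₁⊕X₂)∩V) ). -/
open Submodule Module

/-!
A pair `(X₁, X₂)` yields the subspace `(X₁ ⊕ X₂) ∩ V ≤ V`, whose projections lie in `X₁` and `X₂`;
conversely a subspace `X ≤ V` yields the pair `(π₁ X, π₂ X)`, and `X ≤ (π₁ X ⊕ π₂ X) ∩ V`.
Monotonicity of `ρ₁`, `ρ₂` and of `dim` turns these into the two inequalities between the minima.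
-/

namespace QM

theorem IsRkFn.monotone {F E : Type*} [Field F] [AddCommGroup E] [Module F E]
    {ρ : Submodule F E → ℕ} (h : IsRkFn F ρ) : Monotone ρ :=
  h.2.1

section

variable {F E₁ E₂ : Type*} [Field F] [AddCommGroup E₁] [Module F E₁]
  [AddCommGroup E₂] [Module F E₂] {ρ₁ : Submodule F E₁ → ℕ} {ρ₂ : Submodule F E₂ → ℕ}

theorem exists_dsRank_eq (V : Submodule F (E₁ × E₂)) :
    ∃ X ≤ V, dsRank ρ₁ ρ₂ V = ρ₁ (X.map (LinearMap.fst F E₁ E₂)) +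
      ρ₂ (X.map (LinearMap.snd F E₁ E₂)) + (finrank F V - finrank F X) :=
  (Nat.sInf_mem ⟨_, V, le_rfl, rfl⟩ : dsRank ρ₁ ρ₂ V ∈ _)

theorem dsRank_le_of_le {V X : Submodule F (E₁ × E₂)} (hX : X ≤ V) :
    dsRank ρ₁ ρ₂ V ≤ ρ₁ (X.map (LinearMap.fst F E₁ E₂)) +
      ρ₂ (X.map (LinearMap.snd F E₁ E₂)) + (finrank F V - finrank F X) :=
  Nat.sInf_le ⟨X, hX, rfl⟩

theorem dsRank_le (hρ₁ : Monotone ρ₁) (hρ₂ : Monotone ρ₂) (V : Submodule F (E₁ × E₂))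
    (X₁ : Submodule F E₁) (X₂ : Submodule F E₂) :
    dsRank ρ₁ ρ₂ V ≤ ρ₁ X₁ + ρ₂ X₂ + (finrank F V - finrank F ↥((X₁.prod X₂) ⊓ V)) := by
  obtain ⟨h_fst, h_snd⟩ := (le_prod_iff F E₁ E₂).1 (inf_le_left : X₁.prod X₂ ⊓ V ≤ _)
  refine (dsRank_le_of_le (X := X₁.prod X₂ ⊓ V) inf_le_right).trans ?_
  gcongr
  exacts [hρ₁ h_fst, hρ₂ h_snd]

end

variable {F E₁ E₂ : Type*} [Field F] [Fintype F]
  [AddCommGroup E₁] [Module F E₁] [FiniteDimensional F E₁]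
  [AddCommGroup E₂] [Module F E₂] [FiniteDimensional F E₂]

theorem stmt14 (ρ₁ : Submodule F E₁ → ℕ) (ρ₂ : Submodule F E₂ → ℕ)
    (h₁ : IsRkFn F ρ₁) (h₂ : IsRkFn F ρ₂) (V : Submodule F (E₁ × E₂)) :
    dsRank ρ₁ ρ₂ V = sInf {n : ℕ | ∃ (X₁ : Submodule F E₁) (X₂ : Submodule F E₂),
      X₁ ≤ V.map (LinearMap.fst F E₁ E₂) ∧ X₂ ≤ V.map (LinearMap.snd F E₁ E₂) ∧
      n = ρ₁ X₁ + ρ₂ X₂ + (finrank F V - finrank F ↥((X₁.prod X₂) ⊓ V))} := by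
  apply le_antisymm
  · refine le_csInf ⟨_, _, _, le_rfl, le_rfl, rfl⟩ ?_
    rintro n ⟨X₁, X₂, -, -, rfl⟩
    exact dsRank_le h₁.monotone h₂.monotone V X₁ X₂
  · obtain ⟨X, hXV, hX⟩ := exists_dsRank_eq (ρ₁ := ρ₁) (ρ₂ := ρ₂) V
    rw [hX]
    refine le_trans (Nat.sInf_le ⟨_, _, map_mono hXV, map_mono hXV, rfl⟩) ?_
    have hX_le : X ≤ (X.map (LinearMap.fst F E₁ E₂)).prod (X.map (LinearMap.snd F E₁ E₂)) ⊓ V :=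
      le_inf ((le_prod_iff F E₁ E₂).2 ⟨le_rfl, le_rfl⟩) hXV
    gcongr
    exact Submodule.finrank_mono hX_le

end QM
end
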